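/- Given positive reals y_0,...,y_{M-1} with total sum S = Σ_j y_j, define angles θ_j = 2 arctan(√(Σ_{k=j+1}^{M-1} y_k / y_j)) for 0 ≤ j ≤ M−2. Then the products satisfy cos(θ_0/2) = √(y_0/S), and sin(θ_0/2)⋯sin(θ_{j-1}/2) cos(θ_j/2) = √(y_j/S) for each 1 ≤ j ≤ M−1 (with the convention that the final amplitude is sin(θ_0/2)⋯sin(θ_{M-2}/2) = √(y_{M-1}/S)). -/

import Mathlib

open Real Finset

/-- Correctness of the rotation-angle assignment in the sparse
state-preparation-pair construction: with
`θ_j = 2 arctan √((∑_{k=j+1}^{M-1} y_k) / y_j)`, the ladder of rotations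
produces amplitudes `cos(θ₀/2) = √(y₀/S)`,
`sin(θ₀/2)⋯sin(θ_{j-1}/2)·cos(θ_j/2) = √(y_j/S)` for `1 ≤ j ≤ M−1`, and the
final amplitude `sin(θ₀/2)⋯sin(θ_{M-2}/2) = √(y_{M-1}/S)`. -/
theorem stmt_10 (M : ℕ) (hM : 1 ≤ M) (y : ℕ → ℝ)
    (hy : ∀ j < M, 0 < y j)
    (S : ℝ) (hS : S = ∑ j ∈ Finset.range M, y j)
    (θ : ℕ → ℝ)
    (hθ : ∀ j, θ j = 2 * Real.arctan (Real.sqrt ((∑ k ∈ Finset.Ico (j + 1) M, y k) / y j))) :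
    Real.cos (θ 0 / 2) = Real.sqrt (y 0 / S) ∧
      (∀ j, 1 ≤ j → j ≤ M - 1 →
        (∏ i ∈ Finset.range j, Real.sin (θ i / 2)) * Real.cos (θ j / 2) =
          Real.sqrt (y j / S)) ∧
      (∏ i ∈ Finset.range (M - 1), Real.sin (θ i / 2)) =
        Real.sqrt (y (M - 1) / S) := by
  set T : ℕ → ℝ := fun j => ∑ k ∈ Finset.Ico j M, y k with hTdef
  have hTpos : ∀ j < M, 0 < T j := by
    intro j hj
    apply Finset.sum_pos
    · intro k hk; exact hy k (Finset.mem_Ico.mp hk).2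
    · exact ⟨j, Finset.mem_Ico.mpr ⟨le_refl j, hj⟩⟩
  have hTnonneg : ∀ j, 0 ≤ T j := by
    intro j
    apply Finset.sum_nonneg
    intro k hk; exact (hy k (Finset.mem_Ico.mp hk).2).le
  have hST : S = T 0 := by
    rw [hS, Finset.range_eq_Ico]
  have hSpos : 0 < S := hST ▸ hTpos 0 (by omega)
  have hsplit : ∀ j < M, T j = y j + T (j + 1) := by
    intro j hj
    rw [hTdef]
    simp only
    rw [← Finset.insert_Ico_add_one_left_eq_Ico hj, Finset.sum_insert (by simp)]
  have hθ' : ∀ j, θ j = 2 * Real.arctan (Real.sqrt (T (j+1) / y j)) := hθ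
  have h1 : ∀ j < M, 1 + Real.sqrt (T (j+1) / y j) ^ 2 = T j / y j := by
    intro j hj
    have hyj := hy j hj
    rw [Real.sq_sqrt (div_nonneg (hTnonneg _) hyj.le)]
    rw [hsplit j hj]
    field_simp
  -- cos and sin formulas
  have hcos : ∀ j < M, Real.cos (θ j / 2) = Real.sqrt (y j / T j) := by
    intro j hj
    rw [hθ', mul_div_cancel_left₀ _ (two_ne_zero), Real.cos_arctan, h1 j hj,
      one_div, ← Real.sqrt_inv, inv_div]
  have hsin : ∀ j < M, Real.sin (θ j / 2) = Real.sqrt (T (j+1) / T j) := by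
    intro j hj
    have hyj := hy j hj
    have hTj := hTpos j hj
    rw [hθ', mul_div_cancel_left₀ _ (two_ne_zero), Real.sin_arctan, h1 j hj,
      ← Real.sqrt_div (div_nonneg (hTnonneg _) hyj.le)]
    congr 1
    field_simp
  -- telescoping product
  have hprod : ∀ j ≤ M - 1, (∏ i ∈ Finset.range j, Real.sin (θ i / 2)) = Real.sqrt (T j / S) := by
    intro j hj
    induction j with
    | zero => simp [← hST, div_self hSpos.ne']
    | succ n ih =>
      rw [Finset.prod_range_succ, ih (by omega), hsin n (by omega),
        ← Real.sqrt_mul (div_nonneg (hTnonneg _) hSpos.le)]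
      congr 1
      have hTn := hTpos n (by omega)
      field_simp
  refine ⟨?_, ?_, ?_⟩
  · rw [hcos 0 (by omega), hST]
  · intro j hj1 hj2
    have hjM : j < M := by omega
    rw [hprod j hj2, hcos j hjM, ← Real.sqrt_mul (div_nonneg (hTnonneg _) hSpos.le)]
    congr 1
    have hTj := hTpos j hjM
    field_simp
  · rw [hprod (M - 1) le_rfl]
    congr 2
    have hTM : T M = 0 := by rw [hTdef]; simp
    have := hsplit (M - 1) (by omega)
    rw [show M - 1 + 1 = M from by omega, hTM] at this
    linarith
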